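/- arXiv:1812.07379 — 3 statements merged into one kernel-verified Lean document; each statement's English description precedes it below -/
import Mathlib

section
/- Let (u, τ, S) be a C² classical solution of the compressible Euler equations on ℝ × [0,T). Then the gradient variables satisfy the Riccati equations ∂₊α̃ = k₁( k₂(3α̃ + β̃) + α̃β̃ − α̃² ) and ∂₋β̃ = k₁( −k₂(α̃ + 3β̃) + α̃β̃ − β̃² ) at every point of ℝ × [0,T), where k₁ = ((γ+1)K_c/(2(γ−1))) η^{2/(γ−1)} and k₂ = ((γ−1)/(γ(γ+1))) η m_x. -/
noncomputable section

open Real Set MeasureTheory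
open scoped ENNReal

/-- The time domain `[0, T)`, where `T ∈ (0, ∞]` may be infinite. -/
def Tset (T : ℝ≥0∞) : Set ℝ := {t : ℝ | 0 ≤ t ∧ ENNReal.ofReal t < T}

/-- `m(x) = exp (S x / (2 c_v))`. -/
def mFun (cv : ℝ) (S : ℝ → ℝ) (x : ℝ) : ℝ := Real.exp (S x / (2 * cv))

/-- `η = (2√(Kγ)/(γ−1)) τ^{−(γ−1)/2}`. -/
def etaFun (K γ : ℝ) (τ : ℝ → ℝ → ℝ) (x t : ℝ) : ℝ :=
  2 * Real.sqrt (K * γ) / (γ - 1) * τ x t ^ (-(γ - 1) / 2)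

/-- pressure `p = K e^{S/c_v} τ^{−γ}`. -/
def pFun (K cv γ : ℝ) (S : ℝ → ℝ) (τ : ℝ → ℝ → ℝ) (x t : ℝ) : ℝ :=
  K * Real.exp (S x / cv) * τ x t ^ (-γ)

/-- `K_τ = (2√(Kγ)/(γ−1))^{2/(γ−1)}`. -/
def Ktau (K γ : ℝ) : ℝ := (2 * Real.sqrt (K * γ) / (γ - 1)) ^ (2 / (γ - 1))

/-- `K_c = √(Kγ) K_τ^{−(γ+1)/2}`. -/
def KcConst (K γ : ℝ) : ℝ := Real.sqrt (K * γ) * Ktau K γ ^ (-(γ + 1) / 2)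

/-- wave speed `c = K_c m η^{(γ+1)/(γ−1)}`. -/
def cFun (K cv γ : ℝ) (S : ℝ → ℝ) (τ : ℝ → ℝ → ℝ) (x t : ℝ) : ℝ :=
  KcConst K γ * mFun cv S x * etaFun K γ τ x t ^ ((γ + 1) / (γ - 1))

/-- gradient variable `α̃ = u_x + m η_x + ((γ−1)/γ) m_x η`. -/
def alphaT (K cv γ : ℝ) (S : ℝ → ℝ) (u τ : ℝ → ℝ → ℝ) (x t : ℝ) : ℝ :=
  deriv (fun x' => u x' t) x + mFun cv S x * deriv (fun x' => etaFun K γ τ x' t) x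
    + (γ - 1) / γ * deriv (mFun cv S) x * etaFun K γ τ x t

/-- gradient variable `β̃ = u_x − m η_x − ((γ−1)/γ) m_x η`. -/
def betaT (K cv γ : ℝ) (S : ℝ → ℝ) (u τ : ℝ → ℝ → ℝ) (x t : ℝ) : ℝ :=
  deriv (fun x' => u x' t) x - mFun cv S x * deriv (fun x' => etaFun K γ τ x' t) x
    - (γ - 1) / γ * deriv (mFun cv S) x * etaFun K γ τ x t

/-- A classical solution of the compressible Euler equations on `ℝ × [0,T)`:
`τ > 0`, `τ_t = u_x` and `u_t = −p_x` pointwise (the entropy `S = S(x)` is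
time-independent by fiat, which encodes `S_t = 0`). -/
def IsEulerSol (K cv γ : ℝ) (T : ℝ≥0∞) (u τ : ℝ → ℝ → ℝ) (S : ℝ → ℝ) : Prop :=
  (∀ x : ℝ, ∀ t ∈ Tset T, 0 < τ x t) ∧
  (∀ x : ℝ, ∀ t ∈ Tset T,
    HasDerivWithinAt (fun t' => τ x t') (deriv (fun x' => u x' t) x) (Tset T) t) ∧
  (∀ x : ℝ, ∀ t ∈ Tset T,
    HasDerivWithinAt (fun t' => u x t')
      (-(deriv (fun x' => pFun K cv γ S τ x' t) x)) (Tset T) t)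

/-- `C^k` regularity of the solution on `ℝ × [0,T)`. -/
def IsCkSol (k : ℕ) (T : ℝ≥0∞) (u τ : ℝ → ℝ → ℝ) (S : ℝ → ℝ) : Prop :=
  ContDiffOn ℝ k (fun q : ℝ × ℝ => u q.1 q.2) ((Set.univ : Set ℝ) ×ˢ Tset T) ∧
  ContDiffOn ℝ k (fun q : ℝ × ℝ => τ q.1 q.2) ((Set.univ : Set ℝ) ×ˢ Tset T) ∧
  ContDiff ℝ k S

/-- `M* = 4 M_η M_D · max{2(γ−1)/γ, ((3γ−1)/(γ+1))·(4/γ)}`. -/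
def Mstar (γ Mη MD : ℝ) : ℝ :=
  4 * Mη * MD * max (2 * (γ - 1) / γ) ((3 * γ - 1) / (γ + 1) * (4 / γ))

/-- `λ = (1/(4M_η))·((γ+1)/(3γ−1))·M*`. -/
def lamConst (γ Mη MD : ℝ) : ℝ :=
  1 / (4 * Mη) * ((γ + 1) / (3 * γ - 1)) * Mstar γ Mη MD

/-- transformed gradient variable `α = α̃ + λ η`. -/
def alphaV (K cv γ lam : ℝ) (S : ℝ → ℝ) (u τ : ℝ → ℝ → ℝ) (x t : ℝ) : ℝ :=
  alphaT K cv γ S u τ x t + lam * etaFun K γ τ x t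

/-- transformed gradient variable `β = β̃ + λ η`. -/
def betaV (K cv γ lam : ℝ) (S : ℝ → ℝ) (u τ : ℝ → ℝ → ℝ) (x t : ℝ) : ℝ :=
  betaT K cv γ S u τ x t + lam * etaFun K γ τ x t

/-! In the variables `η` and `m` the Euler system reads
`u_t + c (m η_x + ((γ-1)/γ) m_x η) = 0` and `η_t + (c/m) u_x = 0`, because
`p = ((γ-1)/(2γ)) c m η`. Differentiating `α̃ = u_x + m η_x + ((γ-1)/γ) m_x η` along `∂₊` and
exchanging the mixed partials, every second derivative cancels and
`∂₊α̃ = -c_x α̃ + (c m_x / (γ m)) u_x`. Writing `c_x` and `u_x` in terms of `α̃` and `β̃` gives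
the Riccati form. The equation for `β̃` is the same computation for `(-η, -c)`, which leaves the
system invariant. -/

section PartialDerivatives

variable {s : Set ℝ} {F : ℝ → ℝ → ℝ}

lemma hasDerivAt_slice_fst
    (hF : ContDiffOn ℝ 2 (fun q : ℝ × ℝ => F q.1 q.2) (univ ×ˢ s)) {x t : ℝ} (ht : t ∈ s) :
    HasDerivAt (fun y => F y t)
      (fderivWithin ℝ (fun q : ℝ × ℝ => F q.1 q.2) (univ ×ˢ s) (x, t) (1, 0)) x := by
  have hF' := (hF.differentiableOn (by norm_num) (x, t) ⟨mem_univ x, ht⟩).hasFDerivWithinAt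
  have hmaps : MapsTo (fun y : ℝ => (y, t)) univ (univ ×ˢ s) := fun y _ => ⟨mem_univ y, ht⟩
  have := hF'.comp_hasDerivWithinAt x
    (((hasDerivAt_id' x).prodMk (hasDerivAt_const x t)).hasDerivWithinAt (s := univ)) hmaps
  rwa [hasDerivWithinAt_univ] at this

lemma hasDerivWithinAt_slice_snd
    (hF : ContDiffOn ℝ 2 (fun q : ℝ × ℝ => F q.1 q.2) (univ ×ˢ s)) {x t : ℝ} (ht : t ∈ s) :
    HasDerivWithinAt (F x)
      (fderivWithin ℝ (fun q : ℝ × ℝ => F q.1 q.2) (univ ×ˢ s) (x, t) (0, 1)) s t :=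
  (hF.differentiableOn (by norm_num) (x, t) ⟨mem_univ x, ht⟩).hasFDerivWithinAt
    |>.comp_hasDerivWithinAt t
    ((hasDerivAt_const t x).prodMk (hasDerivAt_id' t)).hasDerivWithinAt
    (fun t' ht' => ⟨mem_univ x, ht'⟩)

lemma contDiff_slice_fst
    (hF : ContDiffOn ℝ 2 (fun q : ℝ × ℝ => F q.1 q.2) (univ ×ˢ s)) {t : ℝ} (ht : t ∈ s) :
    ContDiff ℝ 2 (fun y => F y t) := by
  rw [← contDiffOn_univ]
  exact hF.comp (contDiff_id.prodMk contDiff_const).contDiffOn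
    (fun y _ => ⟨mem_univ y, ht⟩ : MapsTo (fun y : ℝ => (y, t)) univ (univ ×ˢ s))

/-- Schwarz's theorem `∂ₜ ∂ₓ F = ∂ₓ ∂ₜ F` on `ℝ × s`. -/
lemma hasDerivWithinAt_deriv_slice_of_hasDerivAt
    (hF : ContDiffOn ℝ 2 (fun q : ℝ × ℝ => F q.1 q.2) (univ ×ˢ s)) (hs : UniqueDiffOn ℝ s)
    {x t D : ℝ} {g : ℝ → ℝ} (ht : t ∈ s) (ht' : t ∈ closure (interior s))
    (hFt : ∀ y, HasDerivWithinAt (F y) (g y) s t) (hg : HasDerivAt g D x) :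
    HasDerivWithinAt (fun t' => deriv (fun y => F y t') x) D s t := by
  set Ω := (univ : Set ℝ) ×ˢ s
  have hΩ : UniqueDiffOn ℝ Ω := uniqueDiffOn_univ.prod hs
  have hxt : (x, t) ∈ Ω := ⟨mem_univ x, ht⟩
  set G := fderivWithin ℝ (fun q : ℝ × ℝ => F q.1 q.2) Ω
  set D₂ := fderivWithin ℝ G Ω (x, t)
  have hG : HasFDerivWithinAt G D₂ Ω (x, t) :=
    ((hF.fderivWithin hΩ (by norm_num)).differentiableOn one_ne_zero _ hxt).hasFDerivWithinAt
  have hsymm : D₂ (1, 0) (0, 1) = D₂ (0, 1) (1, 0) := by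
    refine ((hF _ hxt).isSymmSndFDerivWithinAt (by norm_num) hΩ ?_ hxt).eq _ _
    rw [interior_prod_eq, closure_prod_eq, interior_univ, closure_univ]
    exact ⟨mem_univ x, ht'⟩
  have hg' : HasDerivAt g (D₂ (1, 0) (0, 1)) x := by
    have hmaps : MapsTo (fun y : ℝ => (y, t)) univ Ω := fun y _ => ⟨mem_univ y, ht⟩
    have hGx := hG.comp_hasDerivWithinAt x
      (((hasDerivAt_id' x).prodMk (hasDerivAt_const x t)).hasDerivWithinAt (s := univ)) hmaps
    rw [hasDerivWithinAt_univ] at hGx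
    refine (by simpa using hGx.clm_apply (hasDerivAt_const x ((0 : ℝ), (1 : ℝ))) :
      HasDerivAt (fun y => G (y, t) (0, 1)) _ x).congr_of_eventuallyEq (.of_forall fun y => ?_)
    exact (hs t ht).eq_deriv s (hFt y) (hasDerivWithinAt_slice_snd hF ht)
  have hGt := hG.comp_hasDerivWithinAt t
    ((hasDerivAt_const t x).prodMk (hasDerivAt_id' t)).hasDerivWithinAt
    (fun t' ht' => ⟨mem_univ x, ht'⟩)
  have hGt' : HasDerivWithinAt (fun t' => G (x, t') (1, 0)) (D₂ (0, 1) (1, 0)) s t := by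
    simpa using hGt.clm_apply (hasDerivWithinAt_const t s ((1 : ℝ), (0 : ℝ)))
  rw [hg.unique hg', hsymm]
  exact hGt'.congr (fun t' ht' => (hasDerivAt_slice_fst hF ht').deriv)
    (hasDerivAt_slice_fst hF ht).deriv

end PartialDerivatives

section Characteristics

variable {s : Set ℝ} {u η c : ℝ → ℝ → ℝ} {m : ℝ → ℝ} {δ t : ℝ}

def gradPlus (δ : ℝ) (m : ℝ → ℝ) (u η : ℝ → ℝ → ℝ) (x t : ℝ) : ℝ :=
  deriv (fun y => u y t) x + m x * deriv (fun y => η y t) x + δ * deriv m x * η x t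

def gradMinus (δ : ℝ) (m : ℝ → ℝ) (u η : ℝ → ℝ → ℝ) (x t : ℝ) : ℝ :=
  deriv (fun y => u y t) x - m x * deriv (fun y => η y t) x - δ * deriv m x * η x t

lemma gradMinus_eq_gradPlus_neg : gradMinus δ m u η = gradPlus δ m u (fun x t => -η x t) := by
  funext x t
  simp only [gradMinus, gradPlus, deriv.fun_neg]
  ring

lemma gradPlus_charDeriv
    (hu : ContDiffOn ℝ 2 (fun q : ℝ × ℝ => u q.1 q.2) (univ ×ˢ s))
    (hη : ContDiffOn ℝ 2 (fun q : ℝ × ℝ => η q.1 q.2) (univ ×ˢ s))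
    (hm : ContDiff ℝ 2 m) (hs : UniqueDiffOn ℝ s) (ht : t ∈ s) (ht' : t ∈ closure (interior s))
    (hut : ∀ y, HasDerivWithinAt (u y)
      (-(c y t * (m y * deriv (fun z => η z t) y + δ * deriv m y * η y t))) s t)
    (hηt : ∀ y, HasDerivWithinAt (η y) (-(c y t / m y * deriv (fun z => u z t) y)) s t)
    {x c' : ℝ} (hc : HasDerivAt (fun y => c y t) c' x) (hmx : m x ≠ 0) :
    derivWithin (fun t' => gradPlus δ m u η x t') s t
        + c x t * deriv (fun y => gradPlus δ m u η y t) x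
      = -c' * gradPlus δ m u η x t
        + (1 - δ) * (c x t * deriv m x / m x) * deriv (fun y => u y t) x := by
  have hU := contDiff_slice_fst hu ht
  have hE := contDiff_slice_fst hη ht
  have hE₁ := (hE.differentiable (by norm_num) x).hasDerivAt
  have hm₁ := (hm.differentiable (by norm_num) x).hasDerivAt
  have hU₂ := (hU.differentiable_deriv_two x).hasDerivAt
  have hE₂ := (hE.differentiable_deriv_two x).hasDerivAt
  have hm₂ := (hm.differentiable_deriv_two x).hasDerivAt
  have hux_t := hasDerivWithinAt_deriv_slice_of_hasDerivAt hu hs ht ht' hut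
    (hc.mul ((hm₁.mul hE₂).add ((hm₂.const_mul δ).mul hE₁))).neg
  have hηx_t := hasDerivWithinAt_deriv_slice_of_hasDerivAt hη hs ht ht' hηt
    ((hc.div hm₁ hmx).mul hU₂).neg
  have h_time : HasDerivWithinAt (fun t' => gradPlus δ m u η x t') _ s t :=
    (hux_t.add (hηx_t.const_mul (m x))).add ((hηt x).const_mul (δ * deriv m x))
  have h_space : HasDerivAt (fun y => gradPlus δ m u η y t) _ x :=
    (hU₂.add (hm₁.mul hE₂)).add ((hm₂.const_mul δ).mul hE₁)
  rw [h_time.derivWithin (hs t ht), h_space.deriv]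
  simp only [gradPlus, Pi.add_apply, Pi.mul_apply, Pi.div_apply]
  field_simp
  ring

/-- The backward family is the forward one for `(-η, -c)`, under which the system is invariant. -/
lemma gradMinus_charDeriv
    (hu : ContDiffOn ℝ 2 (fun q : ℝ × ℝ => u q.1 q.2) (univ ×ˢ s))
    (hη : ContDiffOn ℝ 2 (fun q : ℝ × ℝ => η q.1 q.2) (univ ×ˢ s))
    (hm : ContDiff ℝ 2 m) (hs : UniqueDiffOn ℝ s) (ht : t ∈ s) (ht' : t ∈ closure (interior s))
    (hut : ∀ y, HasDerivWithinAt (u y)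
      (-(c y t * (m y * deriv (fun z => η z t) y + δ * deriv m y * η y t))) s t)
    (hηt : ∀ y, HasDerivWithinAt (η y) (-(c y t / m y * deriv (fun z => u z t) y)) s t)
    {x c' : ℝ} (hc : HasDerivAt (fun y => c y t) c' x) (hmx : m x ≠ 0) :
    derivWithin (fun t' => gradMinus δ m u η x t') s t
        - c x t * deriv (fun y => gradMinus δ m u η y t) x
      = c' * gradMinus δ m u η x t
        - (1 - δ) * (c x t * deriv m x / m x) * deriv (fun y => u y t) x := by
  have h := gradPlus_charDeriv (δ := δ) (η := fun x t => -η x t) (c := fun x t => -c x t)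
    hu hη.neg hm hs ht ht' (fun y => by simp only [deriv.fun_neg]; convert hut y using 1; ring)
    (fun y => (hηt y).neg.congr_deriv (by ring)) hc.neg hmx
  rw [gradMinus_eq_gradPlus_neg]
  linear_combination h

end Characteristics

section Euler

variable {K cv γ : ℝ} {τ : ℝ → ℝ → ℝ} {S : ℝ → ℝ}

lemma Tset_eq_Ico_or_Ici (T : ℝ≥0∞) : Tset T = Ico 0 T.toReal ∨ Tset T = Ici 0 := by
  by_cases hT : T = ⊤
  · right
    ext t
    simp [Tset, hT]
  · left
    ext t
    exact and_congr_right fun h0 => ENNReal.ofReal_lt_iff_lt_toReal h0 hT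

lemma uniqueDiffOn_Tset (T : ℝ≥0∞) : UniqueDiffOn ℝ (Tset T) := by
  rcases Tset_eq_Ico_or_Ici T with h | h <;> rw [h]
  · exact uniqueDiffOn_Ico _ _
  · exact uniqueDiffOn_Ici _

lemma mem_closure_interior_Tset {T : ℝ≥0∞} {t : ℝ} (ht : t ∈ Tset T) :
    t ∈ closure (interior (Tset T)) := by
  rcases Tset_eq_Ico_or_Ici T with h | h <;> rw [h] at ht ⊢
  · rw [interior_Ico, closure_Ioo (ht.1.trans_lt ht.2).ne]
    exact Ico_subset_Icc_self ht
  · rwa [interior_Ici, closure_Ioi]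

lemma etaCoeff_pos (hK : 0 < K) (hγ : 1 < γ) : 0 < 2 * √(K * γ) / (γ - 1) := by
  have : 0 < √(K * γ) := Real.sqrt_pos.2 (by nlinarith)
  exact div_pos (by linarith) (by linarith)

lemma KcConst_mul_rpow (hK : 0 < K) (hγ : 1 < γ) :
    KcConst K γ * (2 * √(K * γ) / (γ - 1)) ^ ((γ + 1) / (γ - 1)) = √(K * γ) := by
  have hA := etaCoeff_pos hK hγ
  have hγ1 : γ - 1 ≠ 0 := by linarith
  rw [KcConst, Ktau, ← Real.rpow_mul hA.le, mul_assoc, ← Real.rpow_add hA,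
    show 2 / (γ - 1) * (-(γ + 1) / 2) + (γ + 1) / (γ - 1) = 0 by field_simp; ring,
    Real.rpow_zero, mul_one]

lemma etaFun_pos (hK : 0 < K) (hγ : 1 < γ) {x t : ℝ} (hτ : 0 < τ x t) : 0 < etaFun K γ τ x t :=
  mul_pos (etaCoeff_pos hK hγ) (Real.rpow_pos_of_pos hτ _)

lemma cFun_eq_sqrt_mul_rpow (hK : 0 < K) (hγ : 1 < γ) {x t : ℝ} (hτ : 0 < τ x t) :
    cFun K cv γ S τ x t = √(K * γ) * mFun cv S x * τ x t ^ (-(γ + 1) / 2) := by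
  have hγ1 : γ - 1 ≠ 0 := by linarith
  rw [cFun, etaFun, Real.mul_rpow (etaCoeff_pos hK hγ).le (Real.rpow_nonneg hτ.le _),
    ← Real.rpow_mul hτ.le, show -(γ - 1) / 2 * ((γ + 1) / (γ - 1)) = -(γ + 1) / 2 by
      field_simp]
  linear_combination mFun cv S x * τ x t ^ (-(γ + 1) / 2) * KcConst_mul_rpow hK hγ

lemma pFun_eq (hK : 0 < K) (hγ : 1 < γ) {x t : ℝ} (hτ : 0 < τ x t) :
    pFun K cv γ S τ x t = (γ - 1) / (2 * γ) * KcConst K γ * mFun cv S x ^ 2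
      * etaFun K γ τ x t ^ (2 * γ / (γ - 1)) := by
  have hA := etaCoeff_pos hK hγ
  have hγ1 : γ - 1 ≠ 0 := by linarith
  have hm : mFun cv S x ^ 2 = Real.exp (S x / cv) := by
    rw [mFun, ← Real.exp_nat_mul]
    congr 1
    ring
  have hη : etaFun K γ τ x t ^ (2 * γ / (γ - 1))
      = (2 * √(K * γ) / (γ - 1)) ^ ((γ + 1) / (γ - 1)) * (2 * √(K * γ) / (γ - 1))
        * τ x t ^ (-γ) := by
    rw [etaFun, Real.mul_rpow hA.le (Real.rpow_nonneg hτ.le _), ← Real.rpow_mul hτ.le,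
      show -(γ - 1) / 2 * (2 * γ / (γ - 1)) = -γ by field_simp,
      show 2 * γ / (γ - 1) = (γ + 1) / (γ - 1) + 1 by field_simp; ring,
      Real.rpow_add hA, Real.rpow_one]
  have hK' : √(K * γ) * √(K * γ) = K * γ := Real.mul_self_sqrt (by nlinarith)
  have hγ0 : γ ≠ 0 := by linarith
  rw [pFun, hm, hη]
  linear_combination (norm := skip) -(γ - 1) / (2 * γ) * Real.exp (S x / cv)
    * (2 * √(K * γ) / (γ - 1)) * τ x t ^ (-γ) * KcConst_mul_rpow hK hγ
    - Real.exp (S x / cv) * τ x t ^ (-γ) / γ * hK'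
  field_simp
  ring

lemma cFun_eq_mul_rpow (hK : 0 < K) (hγ : 1 < γ) {x t : ℝ} (hτ : 0 < τ x t) :
    cFun K cv γ S τ x t
      = KcConst K γ * mFun cv S x * etaFun K γ τ x t ^ (2 / (γ - 1)) * etaFun K γ τ x t := by
  have hγ1 : γ - 1 ≠ 0 := by linarith
  rw [cFun, mul_assoc _ (_ ^ _), ← Real.rpow_add_one (etaFun_pos hK hγ hτ).ne',
    show 2 / (γ - 1) + 1 = (γ + 1) / (γ - 1) by field_simp; ring]

lemma contDiffOn_etaFun {n : WithTop ℕ∞} {Ω : Set (ℝ × ℝ)}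
    (hτ : ContDiffOn ℝ n (fun q : ℝ × ℝ => τ q.1 q.2) Ω) (hpos : ∀ q ∈ Ω, 0 < τ q.1 q.2) :
    ContDiffOn ℝ n (fun q : ℝ × ℝ => etaFun K γ τ q.1 q.2) Ω := fun q hq =>
  contDiffWithinAt_const.mul ((hτ q hq).rpow_const_of_ne (hpos q hq).ne')

lemma hasDerivWithinAt_etaFun (hK : 0 < K) (hγ : 1 < γ) {s : Set ℝ} {x t U' : ℝ}
    (hτ : 0 < τ x t) (hτt : HasDerivWithinAt (τ x) U' s t) :
    HasDerivWithinAt (etaFun K γ τ x) (-(cFun K cv γ S τ x t / mFun cv S x * U')) s t := by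
  have hγ1 : γ - 1 ≠ 0 := by linarith
  refine ((hτt.rpow_const (p := -(γ - 1) / 2) (Or.inl hτ.ne')).const_mul
    (2 * √(K * γ) / (γ - 1))).congr_deriv ?_
  have hm : mFun cv S x ≠ 0 := (Real.exp_pos _).ne'
  rw [cFun_eq_sqrt_mul_rpow hK hγ hτ, show -(γ - 1) / 2 - 1 = -(γ + 1) / 2 by ring]
  field_simp

lemma hasDerivAt_pFun (hK : 0 < K) (hγ : 1 < γ) {x t E' m' : ℝ} (hτ : ∀ y, 0 < τ y t)
    (hE : HasDerivAt (fun y => etaFun K γ τ y t) E' x) (hm : HasDerivAt (mFun cv S) m' x) :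
    HasDerivAt (fun y => pFun K cv γ S τ y t)
      (cFun K cv γ S τ x t * (mFun cv S x * E' + (γ - 1) / γ * m' * etaFun K γ τ x t)) x := by
  have hγ1 : γ - 1 ≠ 0 := by linarith
  have hη := etaFun_pos hK hγ (hτ x)
  have hp : HasDerivAt (fun y => (γ - 1) / (2 * γ) * KcConst K γ * mFun cv S y ^ 2
      * etaFun K γ τ y t ^ (2 * γ / (γ - 1))) _ x :=
    ((hm.pow 2).const_mul ((γ - 1) / (2 * γ) * KcConst K γ)).mul
      (hE.rpow_const (p := 2 * γ / (γ - 1)) (Or.inl hη.ne'))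
  rw [funext fun y => pFun_eq (S := S) (cv := cv) hK hγ (hτ y)]
  refine hp.congr_deriv ?_
  rw [cFun_eq_mul_rpow hK hγ (hτ x), show 2 * γ / (γ - 1) = 2 / (γ - 1) + 1 + 1 by field_simp; ring,
    add_sub_cancel_right, Real.rpow_add_one hη.ne', Real.rpow_add_one hη.ne', Pi.pow_apply]
  field_simp
  ring

lemma hasDerivAt_cFun (hK : 0 < K) (hγ : 1 < γ) {x t E' m' : ℝ} (hτ : 0 < τ x t)
    (hE : HasDerivAt (fun y => etaFun K γ τ y t) E' x) (hm : HasDerivAt (mFun cv S) m' x) :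
    HasDerivAt (fun y => cFun K cv γ S τ y t)
      ((γ + 1) / (γ - 1) * KcConst K γ * etaFun K γ τ x t ^ (2 / (γ - 1))
        * (mFun cv S x * E' + (γ - 1) / (γ + 1) * m' * etaFun K γ τ x t)) x := by
  have hγ1 : γ - 1 ≠ 0 := by linarith
  have hη := etaFun_pos hK hγ hτ
  refine ((hm.const_mul (KcConst K γ)).mul
    (hE.rpow_const (p := (γ + 1) / (γ - 1)) (Or.inl hη.ne'))).congr_deriv ?_
  rw [show (γ + 1) / (γ - 1) = 2 / (γ - 1) + 1 by field_simp; ring, add_sub_cancel_right,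
    Real.rpow_add_one hη.ne']
  field_simp
  ring

end Euler

lemma alphaT_eq_gradPlus {K cv γ : ℝ} {S : ℝ → ℝ} {u τ : ℝ → ℝ → ℝ} :
    alphaT K cv γ S u τ = gradPlus ((γ - 1) / γ) (mFun cv S) u (etaFun K γ τ) := rfl

lemma betaT_eq_gradMinus {K cv γ : ℝ} {S : ℝ → ℝ} {u τ : ℝ → ℝ → ℝ} :
    betaT K cv γ S u τ = gradMinus ((γ - 1) / γ) (mFun cv S) u (etaFun K γ τ) := rfl

theorem riccati_equations_general
    (K cv γ : ℝ) (hK : 0 < K) (hγ : 1 < γ)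
    (T : ℝ≥0∞)
    (u τ : ℝ → ℝ → ℝ) (S : ℝ → ℝ)
    (hsol : IsEulerSol K cv γ T u τ S)
    (hreg : IsCkSol 2 T u τ S) :
    ∀ x : ℝ, ∀ t ∈ Tset T,
      (derivWithin (fun t' => alphaT K cv γ S u τ x t') (Tset T) t
          + cFun K cv γ S τ x t * deriv (fun x' => alphaT K cv γ S u τ x' t) x
        = ((γ + 1) * KcConst K γ / (2 * (γ - 1)) * etaFun K γ τ x t ^ (2 / (γ - 1)))
          * ((γ - 1) / (γ * (γ + 1)) * etaFun K γ τ x t * deriv (mFun cv S) x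
                * (3 * alphaT K cv γ S u τ x t + betaT K cv γ S u τ x t)
              + alphaT K cv γ S u τ x t * betaT K cv γ S u τ x t
              - alphaT K cv γ S u τ x t ^ 2)) ∧
      (derivWithin (fun t' => betaT K cv γ S u τ x t') (Tset T) t
          - cFun K cv γ S τ x t * deriv (fun x' => betaT K cv γ S u τ x' t) x
        = ((γ + 1) * KcConst K γ / (2 * (γ - 1)) * etaFun K γ τ x t ^ (2 / (γ - 1)))
          * (-((γ - 1) / (γ * (γ + 1)) * etaFun K γ τ x t * deriv (mFun cv S) x)
                * (alphaT K cv γ S u τ x t + 3 * betaT K cv γ S u τ x t)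
              + alphaT K cv γ S u τ x t * betaT K cv γ S u τ x t
              - betaT K cv γ S u τ x t ^ 2)) := by
  intro x t ht
  obtain ⟨hτ, hτt, hut⟩ := hsol
  obtain ⟨hu, hτ₂, hS⟩ := hreg
  have hη := contDiffOn_etaFun (K := K) (γ := γ) hτ₂ fun q hq => hτ q.1 q.2 hq.2
  have hm : ContDiff ℝ 2 (mFun cv S) := Real.contDiff_exp.comp (hS.div_const _)
  have hE := fun y => ((contDiff_slice_fst hη ht).differentiable (by norm_num) y).hasDerivAt
  have hm₁ := fun y => (hm.differentiable (by norm_num) y).hasDerivAt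
  have hut' := fun y =>
    (hasDerivAt_pFun hK hγ (fun y => hτ y t ht) (hE y) (hm₁ y)).deriv ▸ hut y t ht
  have hηt := fun y => hasDerivWithinAt_etaFun (cv := cv) (S := S) hK hγ (hτ y t ht) (hτt y t ht)
  have hc := hasDerivAt_cFun hK hγ (hτ x t ht) (hE x) (hm₁ x)
  have hmx : mFun cv S x ≠ 0 := (Real.exp_pos _).ne'
  have hα := gradPlus_charDeriv hu hη hm (uniqueDiffOn_Tset T) ht (mem_closure_interior_Tset ht)
    hut' hηt hc hmx
  have hβ := gradMinus_charDeriv hu hη hm (uniqueDiffOn_Tset T) ht (mem_closure_interior_Tset ht)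
    hut' hηt hc hmx
  have hγ₁ : γ - 1 ≠ 0 := by linarith
  rw [alphaT_eq_gradPlus, betaT_eq_gradMinus, hα, hβ, cFun_eq_mul_rpow hK hγ (hτ x t ht)]
  simp only [gradPlus, gradMinus]
  constructor <;> field_simp <;> ring

/-- Proposition 3.1: Riccati equations for `α̃` and `β̃`.
For a `C²` classical solution, `∂₊α̃ = k₁(k₂(3α̃+β̃) + α̃β̃ − α̃²)` and
`∂₋β̃ = k₁(−k₂(α̃+3β̃) + α̃β̃ − β̃²)`, where
`k₁ = ((γ+1)K_c/(2(γ−1))) η^{2/(γ−1)}` and `k₂ = ((γ−1)/(γ(γ+1))) η m_x`. -/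
theorem riccati_equations
    (K cv γ : ℝ) (hK : 0 < K) (hcv : 0 < cv) (hγ : 1 < γ)
    (T : ℝ≥0∞) (hT : 0 < T)
    (u τ : ℝ → ℝ → ℝ) (S : ℝ → ℝ)
    (hsol : IsEulerSol K cv γ T u τ S)
    (hreg : IsCkSol 2 T u τ S) :
    ∀ x : ℝ, ∀ t ∈ Tset T,
      (derivWithin (fun t' => alphaT K cv γ S u τ x t') (Tset T) t
          + cFun K cv γ S τ x t * deriv (fun x' => alphaT K cv γ S u τ x' t) x
        = ((γ + 1) * KcConst K γ / (2 * (γ - 1)) * etaFun K γ τ x t ^ (2 / (γ - 1)))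
          * ((γ - 1) / (γ * (γ + 1)) * etaFun K γ τ x t * deriv (mFun cv S) x
                * (3 * alphaT K cv γ S u τ x t + betaT K cv γ S u τ x t)
              + alphaT K cv γ S u τ x t * betaT K cv γ S u τ x t
              - alphaT K cv γ S u τ x t ^ 2)) ∧
      (derivWithin (fun t' => betaT K cv γ S u τ x t') (Tset T) t
          - cFun K cv γ S τ x t * deriv (fun x' => betaT K cv γ S u τ x' t) x
        = ((γ + 1) * KcConst K γ / (2 * (γ - 1)) * etaFun K γ τ x t ^ (2 / (γ - 1)))
          * (-((γ - 1) / (γ * (γ + 1)) * etaFun K γ τ x t * deriv (mFun cv S) x)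
                * (alphaT K cv γ S u τ x t + 3 * betaT K cv γ S u τ x t)
              + alphaT K cv γ S u τ x t * betaT K cv γ S u τ x t
              - betaT K cv γ S u τ x t ^ 2)) :=
  riccati_equations_general K cv γ hK hγ T u τ S hsol hreg
end
end

section
/- Let γ > 1, M_η > 0, M_D > 0, set M* = 4 M_η M_D · max{2(γ−1)/γ, (4/γ)·(3γ−1)/(γ+1)} and λ = (1/(4M_η))·((γ+1)/(3γ−1))·M*, and let M ≥ M*. Then for all real numbers α, η, μ with M/2 ≤ α ≤ M, 0 < η ≤ M_η and |μ| ≤ M_D, the following hold: (i) α − λη + (2(γ−1)/γ) η μ > 0; (ii) (λ − (4/γ)μ)(α − λη) ≥ 0; (iii) 0 < α − ((3γ−1)/(γ+1)) λη + ((γ−1)/(γ(γ+1))) η μ ≤ (5/4) M. -/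
noncomputable section

open Real Set MeasureTheory
open scoped ENNReal

/-! Writing `κ = (3γ−1)/(γ+1) > 1`, the constant `λ` is chosen so that `κ λ M_η = M*/4`.
Hence both `λη` and `κλη` are at most `M/4`, while the first entry of the max in `M*` bounds the
`ημ`-terms by `M*/4` and `M*/16`; all of these are dominated by `α ≥ M/2`. The second entry of
the max gives `λ ≥ 4 M_D / γ`, which is the sign condition in (ii). -/

lemma abs_mul_mul_le {c x y X Y : ℝ} (hc : 0 ≤ c) (hx : |x| ≤ X) (hy : |y| ≤ Y) :
    |c * x * y| ≤ c * (X * Y) := by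
  rw [mul_assoc, abs_mul, abs_of_nonneg hc, abs_mul]
  gcongr
  exact (abs_nonneg x).trans hx

section
variable {γ Mη MD : ℝ}

lemma Mstar_pos (hγ : 1 < γ) (hMη : 0 < Mη) (hMD : 0 < MD) : 0 < Mstar γ Mη MD := by
  have hA : 0 < 2 * (γ - 1) / γ := div_pos (by linarith) (by linarith)
  unfold Mstar
  exact mul_pos (by positivity) (hA.trans_le (le_max_left _ _))

lemma mul_lamConst_mul_eq_Mstar_div_four (hγ : 1 < γ) (hMη : Mη ≠ 0) :
    (3 * γ - 1) / (γ + 1) * lamConst γ Mη MD * Mη = Mstar γ Mη MD / 4 := by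
  have h3γ : 3 * γ - 1 ≠ 0 := by linarith
  have hγ1 : γ + 1 ≠ 0 := by linarith
  unfold lamConst
  field_simp

lemma mul_le_Mstar_div_four {c : ℝ} (hc : c ≤ 2 * (γ - 1) / γ) (hMη : 0 ≤ Mη) (hMD : 0 ≤ MD) :
    c * (Mη * MD) ≤ Mstar γ Mη MD / 4 := by
  have hmax := hc.trans (le_max_left _ ((3 * γ - 1) / (γ + 1) * (4 / γ)))
  calc c * (Mη * MD) ≤ max (2 * (γ - 1) / γ) ((3 * γ - 1) / (γ + 1) * (4 / γ)) * (Mη * MD) := by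
        gcongr
    _ = Mstar γ Mη MD / 4 := by unfold Mstar; ring

lemma four_div_mul_le_lamConst (hγ : 1 < γ) (hMη : Mη ≠ 0) (hMD : 0 ≤ MD) :
    4 / γ * MD ≤ lamConst γ Mη MD := by
  have h3γ : 0 < 3 * γ - 1 := by linarith
  have hγ1 : 0 < γ + 1 := by linarith
  have hlam : lamConst γ Mη MD
      = MD * ((γ + 1) / (3 * γ - 1)) * max (2 * (γ - 1) / γ) ((3 * γ - 1) / (γ + 1) * (4 / γ)) := by
    unfold lamConst Mstar
    field_simp
  calc 4 / γ * MD = MD * ((γ + 1) / (3 * γ - 1)) * ((3 * γ - 1) / (γ + 1) * (4 / γ)) := by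
        have hκ : (γ + 1) / (3 * γ - 1) * ((3 * γ - 1) / (γ + 1)) = 1 := by
          rw [div_mul_div_comm, mul_comm (γ + 1), div_self (mul_pos h3γ hγ1).ne']
        linear_combination -(4 / γ * MD) * hκ
    _ ≤ lamConst γ Mη MD := by
        rw [hlam]
        gcongr
        exact le_max_right _ _

lemma lamConst_pos (hγ : 1 < γ) (hMη : Mη ≠ 0) (hMD : 0 < MD) : 0 < lamConst γ Mη MD :=
  (mul_pos (div_pos four_pos (by linarith)) hMD).trans_le
    (four_div_mul_le_lamConst hγ hMη hMD.le)

lemma lamConst_mul_lt_Mstar_div_four (hγ : 1 < γ) (hMη : 0 < Mη) (hMD : 0 < MD) :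
    lamConst γ Mη MD * Mη < Mstar γ Mη MD / 4 := by
  have hκ : 1 < (3 * γ - 1) / (γ + 1) := by rw [one_lt_div (by linarith)]; linarith
  rw [← mul_lamConst_mul_eq_Mstar_div_four hγ hMη.ne', mul_assoc]
  exact lt_mul_of_one_lt_left (mul_pos (lamConst_pos hγ hMη.ne' hMD) hMη) hκ

end

lemma four_mul_sub_one_div_mul_add_one_le {γ : ℝ} (hγ : 1 ≤ γ) :
    4 * ((γ - 1) / (γ * (γ + 1))) ≤ 2 * (γ - 1) / γ := by
  rw [mul_div_assoc', div_le_div_iff₀ (by positivity) (by positivity)]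
  nlinarith [mul_nonneg (sub_nonneg.2 hγ) (sub_nonneg.2 hγ)]

/-- inequalities (4.5)–(4.6): for `γ > 1`, `M_η, M_D > 0`,
`M ≥ M*`, `λ` as defined, and any `α ∈ [M/2, M]`, `η ∈ (0, M_η]`, `|μ| ≤ M_D`:
(i) `α − λη + (2(γ−1)/γ) ημ > 0`; (ii) `(λ − (4/γ)μ)(α − λη) ≥ 0`;
(iii) `0 < α − ((3γ−1)/(γ+1)) λη + ((γ−1)/(γ(γ+1))) ημ ≤ (5/4)M`. -/
theorem pointwise_sign_inequalities
    (γ Mη MD : ℝ) (hγ : 1 < γ) (hMη : 0 < Mη) (hMD : 0 < MD)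
    (M : ℝ) (hM : Mstar γ Mη MD ≤ M) :
    ∀ α η μ : ℝ, M / 2 ≤ α → α ≤ M → 0 < η → η ≤ Mη → |μ| ≤ MD →
      (0 < α - lamConst γ Mη MD * η + 2 * (γ - 1) / γ * η * μ) ∧
      (0 ≤ (lamConst γ Mη MD - 4 / γ * μ) * (α - lamConst γ Mη MD * η)) ∧
      (0 < α - (3 * γ - 1) / (γ + 1) * lamConst γ Mη MD * η
            + (γ - 1) / (γ * (γ + 1)) * η * μ ∧
        α - (3 * γ - 1) / (γ + 1) * lamConst γ Mη MD * η
            + (γ - 1) / (γ * (γ + 1)) * η * μ ≤ 5 / 4 * M) := by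
  intro α η μ hα₁ hα₂ hη hηMη hμ
  set lam := lamConst γ Mη MD
  set κ := (3 * γ - 1) / (γ + 1)
  have hM₀ : 0 < M := (Mstar_pos hγ hMη hMD).trans_le hM
  have hlam : 0 < lam := lamConst_pos hγ hMη.ne' hMD
  have hκlam : 0 < κ * lam := mul_pos (div_pos (by linarith) (by linarith)) hlam
  have hlamη : lam * η < M / 4 := calc
    lam * η ≤ lam * Mη := by gcongr
    _ < Mstar γ Mη MD / 4 := lamConst_mul_lt_Mstar_div_four hγ hMη hMD
    _ ≤ M / 4 := by linarith
  have hκlamη : κ * lam * η ≤ M / 4 := calc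
    κ * lam * η ≤ κ * lam * Mη := by gcongr
    _ = Mstar γ Mη MD / 4 := mul_lamConst_mul_eq_Mstar_div_four hγ hMη.ne'
    _ ≤ M / 4 := by linarith
  have hη' : |η| ≤ Mη := by rwa [abs_of_pos hη]
  have hAημ := (abs_mul_mul_le (by positivity) hη' hμ).trans
    (mul_le_Mstar_div_four le_rfl hMη.le hMD.le)
  have hDημ := abs_mul_mul_le (by positivity : 0 ≤ (γ - 1) / (γ * (γ + 1))) hη' hμ
  have hD := mul_le_Mstar_div_four (four_mul_sub_one_div_mul_add_one_le hγ.le) hMη.le hMD.le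
  have h4μ : 4 / γ * μ ≤ lam := calc
    4 / γ * μ ≤ 4 / γ * MD := by gcongr; exact (le_abs_self μ).trans hμ
    _ ≤ lam := four_div_mul_le_lamConst hγ hMη.ne' hMD.le
  obtain ⟨hA₁, -⟩ := abs_le.1 hAημ
  obtain ⟨hD₁, hD₂⟩ := abs_le.1 hDημ
  exact ⟨by linarith, mul_nonneg (by linarith) (by linarith),
    by linarith [mul_pos hκlam hη], by linarith [mul_pos hκlam hη]⟩
end
end

section
/- Let γ > 1, K_c > 0, M_η > 0, M_D > 0, set M* = 4 M_η M_D · max{2(γ−1)/γ, (4/γ)·(3γ−1)/(γ+1)} and λ = (1/(4M_η))·((γ+1)/(3γ−1))·M*, and let M ≥ M*. Then for all real numbers α, β, η, μ with M/2 ≤ α ≤ M, β ≤ M, 0 < η ≤ M_η and |μ| ≤ M_D, one has −(1/2) λ K_c η^{(γ+1)/(γ−1)} ( α − λη + (2(γ−1)/γ) η μ ) − (1/2) K_c η^{(γ+1)/(γ−1)} ( λ − (4/γ) μ )( α − λη ) + ((γ+1)/(2(γ−1))) K_c η^{2/(γ−1)} ( α − ((3γ−1)/(γ+1)) λη + ((γ−1)/(γ(γ+1)))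 η μ )( β − α ) ≤ (5(γ+1)/(8(γ−1))) K_c M_η^{2/(γ−1)} · M · (M − α). -/
noncomputable section

open Real Set MeasureTheory
open scoped ENNReal

set_option maxHeartbeats 1000000 in
/-- the estimate (4.11): for `γ > 1`, `K_c > 0`, `M_η, M_D > 0`,
`M ≥ M*`, `λ` as defined, and `α ∈ [M/2, M]`, `β ≤ M`, `η ∈ (0, M_η]`, `|μ| ≤ M_D`,
the right-hand side of the identity for `∂₊α` is at most
`(5(γ+1)/(8(γ−1))) K_c M_η^{2/(γ−1)} · M · (M − α)`. -/
theorem riccati_rhs_estimate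
    (γ Kc Mη MD : ℝ) (hγ : 1 < γ) (hKc : 0 < Kc) (hMη : 0 < Mη) (hMD : 0 < MD)
    (M : ℝ) (hM : Mstar γ Mη MD ≤ M) :
    ∀ α β η μ : ℝ, M / 2 ≤ α → α ≤ M → β ≤ M → 0 < η → η ≤ Mη → |μ| ≤ MD →
      -(1 / 2) * lamConst γ Mη MD * Kc * η ^ ((γ + 1) / (γ - 1))
            * (α - lamConst γ Mη MD * η + 2 * (γ - 1) / γ * η * μ)
        - 1 / 2 * Kc * η ^ ((γ + 1) / (γ - 1)) * (lamConst γ Mη MD - 4 / γ * μ)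
            * (α - lamConst γ Mη MD * η)
        + (γ + 1) / (2 * (γ - 1)) * Kc * η ^ (2 / (γ - 1))
            * (α - (3 * γ - 1) / (γ + 1) * lamConst γ Mη MD * η
                + (γ - 1) / (γ * (γ + 1)) * η * μ)
            * (β - α)
      ≤ 5 * (γ + 1) / (8 * (γ - 1)) * Kc * Mη ^ (2 / (γ - 1)) * M * (M - α) := by
  intro α β η μ hα1 hα2 hβ hη0 hηM hμ
  obtain ⟨hμ1, hμ2⟩ := abs_le.mp hμ
  have hγ1 : (0:ℝ) < γ - 1 := by linarith
  have hγ0 : (0:ℝ) < γ := by linarith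
  have hγp : (0:ℝ) < γ + 1 := by linarith
  have h3γ : (0:ℝ) < 3 * γ - 1 := by linarith
  set Ms := Mstar γ Mη MD with hMsdef
  set lam := lamConst γ Mη MD with hlamdef
  clear_value Ms lam
  have hMs1 : 4 * Mη * MD * (2 * (γ - 1) / γ) ≤ Ms := by
    rw [hMsdef, Mstar]
    exact mul_le_mul_of_nonneg_left
      (le_max_left (2 * (γ - 1) / γ) ((3 * γ - 1) / (γ + 1) * (4 / γ)))
      (by positivity)
  have hMs2 : 4 * Mη * MD * ((3 * γ - 1) / (γ + 1) * (4 / γ)) ≤ Ms := by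
    rw [hMsdef, Mstar]
    exact mul_le_mul_of_nonneg_left
      (le_max_right (2 * (γ - 1) / γ) ((3 * γ - 1) / (γ + 1) * (4 / γ)))
      (by positivity)
  have hMs0 : 0 < Ms := by
    have h1 : (0:ℝ) < 4 * Mη * MD * (2 * (γ - 1) / γ) := by
      apply mul_pos (by positivity)
      exact div_pos (by linarith) hγ0
    linarith
  have hM0 : 0 < M := lt_of_lt_of_le hMs0 hM
  have hlam_eq : lam = (γ + 1) / (3 * γ - 1) * Ms / (4 * Mη) := by
    rw [hlamdef, lamConst, ← hMsdef]; ring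
  have hlam0 : 0 < lam := by
    rw [hlam_eq]
    exact div_pos (mul_pos (div_pos hγp h3γ) hMs0) (by linarith)
  have hMηne : Mη ≠ 0 := ne_of_gt hMη
  have hγpne : (γ + 1) ≠ 0 := ne_of_gt hγp
  have h3γne : (3 * γ - 1) ≠ 0 := ne_of_gt h3γ
  have hkey : (3 * γ - 1) / (γ + 1) * (lam * Mη) = Ms / 4 := by
    rw [hlam_eq]; field_simp
  have hr1 : (1:ℝ) ≤ (3 * γ - 1) / (γ + 1) := (one_le_div hγp).mpr (by linarith)
  have hlamMη : lam * Mη ≤ Ms / 4 := by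
    linarith only [hkey,
      mul_le_mul_of_nonneg_right hr1 (mul_nonneg hlam0.le hMη.le)]
  have hlamη : lam * η ≤ M / 4 := by
    have h1 : lam * η ≤ lam * Mη := mul_le_mul_of_nonneg_left hηM hlam0.le
    linarith
  have hc : (0:ℝ) < (γ + 1) / ((3 * γ - 1) * (4 * Mη)) :=
    div_pos hγp (mul_pos h3γ (by linarith))
  have hlam_ge : 4 * MD / γ ≤ lam := by
    have h1 := mul_le_mul_of_nonneg_right hMs2 hc.le
    have h2 : 4 * Mη * MD * ((3 * γ - 1) / (γ + 1) * (4 / γ)) *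
        ((γ + 1) / ((3 * γ - 1) * (4 * Mη))) = 4 * MD / γ := by
      field_simp
    have h3 : Ms * ((γ + 1) / ((3 * γ - 1) * (4 * Mη))) = lam := by
      rw [hlam_eq]; field_simp
    linarith only [h1, h2.symm.le, h3.le]
  have hμlam : 4 / γ * μ ≤ lam := by
    have h1 : 4 / γ * μ ≤ 4 / γ * MD :=
      mul_le_mul_of_nonneg_left hμ2 (div_nonneg (by norm_num) hγ0.le)
    have h2 : 4 / γ * MD = 4 * MD / γ := by ring
    linarith
  have hημ1 : η * μ ≤ Mη * MD := by
    linarith only [mul_le_mul_of_nonneg_left hμ2 hη0.le,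
      mul_le_mul_of_nonneg_right hηM hMD.le]
  have hημ2 : -(Mη * MD) ≤ η * μ := by
    linarith only [mul_le_mul_of_nonneg_left hμ1 hη0.le,
      mul_le_mul_of_nonneg_right hηM hMD.le]
  -- the bracket in the first two terms is nonnegative
  have hY : M / 4 ≤ α - lam * η := by linarith
  have hX : lam ≤ 2 * lam - 4 / γ * μ := by linarith
  have hbr1 : lam * (M / 4) ≤ (2 * lam - 4 / γ * μ) * (α - lam * η) :=
    mul_le_mul hX hY (by linarith) (by linarith)
  have hc2 : (0:ℝ) ≤ lam * (2 * (γ - 1) / γ) :=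
    mul_nonneg hlam0.le (div_nonneg (by linarith) hγ0.le)
  have ha := mul_le_mul_of_nonneg_left hημ2 hc2
  have hb : 2 * (γ - 1) / γ * (Mη * MD) ≤ Ms / 4 := by linarith only [hMs1]
  have hcc : lam * (2 * (γ - 1) / γ * (Mη * MD)) ≤ lam * (M / 4) :=
    mul_le_mul_of_nonneg_left (by linarith) hlam0.le
  have hB : 0 ≤ lam * (α - lam * η + 2 * (γ - 1) / γ * η * μ)
      + (lam - 4 / γ * μ) * (α - lam * η) := by
    linarith only [hbr1, ha, hcc]
  -- power facts
  have hr : (0:ℝ) < η ^ ((γ + 1) / (γ - 1)) := Real.rpow_pos_of_pos hη0 _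
  have hp : (0:ℝ) < η ^ (2 / (γ - 1)) := Real.rpow_pos_of_pos hη0 _
  have hq : (0:ℝ) ≤ Mη ^ (2 / (γ - 1)) := Real.rpow_nonneg hMη.le _
  have hpq : η ^ (2 / (γ - 1)) ≤ Mη ^ (2 / (γ - 1)) :=
    Real.rpow_le_rpow hη0.le hηM (div_nonneg (by norm_num) hγ1.le)
  -- first two terms are ≤ 0
  have hT12 : -(1 / 2) * lam * Kc * η ^ ((γ + 1) / (γ - 1))
        * (α - lam * η + 2 * (γ - 1) / γ * η * μ)
      - 1 / 2 * Kc * η ^ ((γ + 1) / (γ - 1)) * (lam - 4 / γ * μ)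
        * (α - lam * η) ≤ 0 := by
    have h := mul_nonneg (mul_nonneg hKc.le hr.le) hB
    linarith only [h]
  -- bounds on the A factor
  have ht1c : (0:ℝ) ≤ (3 * γ - 1) / (γ + 1) * lam :=
    mul_nonneg (div_nonneg (by linarith) hγp.le) hlam0.le
  have ht1 : (3 * γ - 1) / (γ + 1) * lam * η ≤ M / 4 := by
    have h1 : (3 * γ - 1) / (γ + 1) * lam * η ≤ (3 * γ - 1) / (γ + 1) * lam * Mη :=
      mul_le_mul_of_nonneg_left hηM ht1c
    have h2 : Ms / 4 ≤ M / 4 := by linarith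
    linarith only [h1, hkey, h2]
  have ht1b : 0 ≤ (3 * γ - 1) / (γ + 1) * lam * η :=
    mul_nonneg ht1c hη0.le
  have hc3 : (0:ℝ) ≤ (γ - 1) / (γ * (γ + 1)) :=
    div_nonneg (by linarith) (by positivity)
  have hc3b : (γ - 1) / (γ * (γ + 1)) * (Mη * MD) ≤ M / 8 := by
    have h1 : (γ - 1) / (γ * (γ + 1)) ≤ (γ - 1) / γ := by
      rw [div_le_div_iff₀ (by positivity) hγ0]
      linarith only [mul_nonneg (mul_nonneg hγ1.le hγ0.le) hγ0.le]
    have e1 : (γ - 1) / γ * (Mη * MD) * 8 = 4 * Mη * MD * (2 * (γ - 1) / γ) := by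
      ring
    have h2 : (γ - 1) / γ * (Mη * MD) ≤ Ms / 8 := by linarith only [hMs1, e1]
    have h3 := mul_le_mul_of_nonneg_right h1 (mul_nonneg hMη.le hMD.le)
    linarith only [h2, h3, hM]
  have ht2a : (γ - 1) / (γ * (γ + 1)) * η * μ ≤ M / 8 := by
    linarith only [mul_le_mul_of_nonneg_left hημ1 hc3, hc3b]
  have ht2b : -(M / 8) ≤ (γ - 1) / (γ * (γ + 1)) * η * μ := by
    linarith only [mul_le_mul_of_nonneg_left hημ2 hc3, hc3b]
  have hA1 : 0 ≤ α - (3 * γ - 1) / (γ + 1) * lam * η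
      + (γ - 1) / (γ * (γ + 1)) * η * μ := by linarith
  have hA2 : α - (3 * γ - 1) / (γ + 1) * lam * η
      + (γ - 1) / (γ * (γ + 1)) * η * μ ≤ 5 / 4 * M := by linarith
  -- third term bound
  have hC : (0:ℝ) < (γ + 1) / (2 * (γ - 1)) * Kc :=
    mul_pos (div_pos hγp (by linarith)) hKc
  have hT3 : (γ + 1) / (2 * (γ - 1)) * Kc * η ^ (2 / (γ - 1))
        * (α - (3 * γ - 1) / (γ + 1) * lam * η + (γ - 1) / (γ * (γ + 1)) * η * μ)
        * (β - α)
      ≤ 5 * (γ + 1) / (8 * (γ - 1)) * Kc * Mη ^ (2 / (γ - 1)) * M * (M - α) := by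
    set A := α - (3 * γ - 1) / (γ + 1) * lam * η + (γ - 1) / (γ * (γ + 1)) * η * μ
      with hAdef
    calc (γ + 1) / (2 * (γ - 1)) * Kc * η ^ (2 / (γ - 1)) * A * (β - α)
        = ((γ + 1) / (2 * (γ - 1)) * Kc * η ^ (2 / (γ - 1)) * A) * (β - α) := by ring
      _ ≤ ((γ + 1) / (2 * (γ - 1)) * Kc * η ^ (2 / (γ - 1)) * A) * (M - α) :=
          mul_le_mul_of_nonneg_left (by linarith only [hβ])
            (mul_nonneg (mul_nonneg hC.le hp.le) hA1)
      _ = ((γ + 1) / (2 * (γ - 1)) * Kc * (M - α)) * (η ^ (2 / (γ - 1)) * A) := by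
          ring
      _ ≤ ((γ + 1) / (2 * (γ - 1)) * Kc * (M - α))
            * (Mη ^ (2 / (γ - 1)) * (5 / 4 * M)) :=
          mul_le_mul_of_nonneg_left (mul_le_mul hpq hA2 hA1 hq)
            (mul_nonneg hC.le (by linarith))
      _ = 5 * (γ + 1) / (8 * (γ - 1)) * Kc * Mη ^ (2 / (γ - 1)) * M * (M - α) := by
          have hne : (γ - 1) ≠ 0 := ne_of_gt hγ1
          field_simp
          ring
  linarith only [hT12, hT3]
end
end
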